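/- Let X be a weakly octahedral Banach space and let N be an odd natural number. Then the N-fold injective symmetric tensor product ⊗̂_{ε,s,N} X is locally octahedral. -/

import Mathlib

open Filter Topology

noncomputable section

/-- A Banach space is octahedral (OH). -/
def IsOctahedral (Z : Type*) [NormedAddCommGroup Z] : Prop :=
  ∀ (n : ℕ) (z : Fin n → Z), (∀ i, ‖z i‖ = 1) → ∀ ε : ℝ, 0 < ε →
    ∃ w : Z, ‖w‖ = 1 ∧ ∀ i, ‖z i + w‖ > 2 - ε

/-- Locally octahedral (LOH). -/
def IsLocallyOctahedral (Z : Type*) [NormedAddCommGroup Z] : Prop :=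
  ∀ z : Z, ‖z‖ = 1 → ∀ ε : ℝ, 0 < ε →
    ∃ w : Z, ‖w‖ = 1 ∧ ‖z + w‖ > 2 - ε ∧ ‖z - w‖ > 2 - ε

/-- Weakly octahedral (WOH). -/
def IsWeaklyOctahedral (X : Type*) [NormedAddCommGroup X] [NormedSpace ℝ X] : Prop :=
  ∀ (n : ℕ) (z : Fin n → X), (∀ i, ‖z i‖ = 1) → ∀ f : X →L[ℝ] ℝ, ‖f‖ ≤ 1 →
    ∀ ε : ℝ, 0 < ε → ∃ y : X, ‖y‖ = 1 ∧ ∀ i, ∀ t : ℝ, 0 < t →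
      ‖z i + t • y‖ ≥ (1 - ε) * (|f (z i)| + t) ∧
      ‖z i - t • y‖ ≥ (1 - ε) * (|f (z i)| + t)

/-- Almost square (ASQ), sequential formulation. -/
def IsASQ (Z : Type*) [NormedAddCommGroup Z] : Prop :=
  ∀ (n : ℕ) (z : Fin n → Z), (∀ i, ‖z i‖ = 1) →
    ∃ w : ℕ → Z, (∀ k, ‖w k‖ ≤ 1) ∧
      Tendsto (fun k => ‖w k‖) atTop (nhds 1) ∧
      ∀ i, Tendsto (fun k => ‖z i + w k‖) atTop (nhds 1) ∧
           Tendsto (fun k => ‖z i - w k‖) atTop (nhds 1)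

/-- Almost square (ASQ), finite-ε formulation. -/
def IsASQeps (Z : Type*) [NormedAddCommGroup Z] : Prop :=
  ∀ (n : ℕ) (z : Fin n → Z), (∀ i, ‖z i‖ = 1) → ∀ ε : ℝ, 0 < ε →
    ∃ w : Z, ‖w‖ = 1 ∧ ∀ i, ‖z i + w‖ ≤ 1 + ε ∧ ‖z i - w‖ ≤ 1 + ε

/-- Locally almost square (LASQ), sequential formulation. -/
def IsLASQ (Z : Type*) [NormedAddCommGroup Z] : Prop :=
  ∀ z : Z, ‖z‖ = 1 →
    ∃ w : ℕ → Z, (∀ k, ‖w k‖ ≤ 1) ∧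
      Tendsto (fun k => ‖w k‖) atTop (nhds 1) ∧
      Tendsto (fun k => ‖z + w k‖) atTop (nhds 1) ∧
      Tendsto (fun k => ‖z - w k‖) atTop (nhds 1)

/-- Locally almost square (LASQ), ε formulation. -/
def IsLASQeps (Z : Type*) [NormedAddCommGroup Z] : Prop :=
  ∀ z : Z, ‖z‖ = 1 → ∀ ε : ℝ, 0 < ε →
    ∃ w : Z, ‖w‖ = 1 ∧ ‖z + w‖ ≤ 1 + ε ∧ ‖z - w‖ ≤ 1 + ε

/-- Weakly almost square (WASQ). -/
def IsWASQ (Z : Type*) [NormedAddCommGroup Z] [NormedSpace ℝ Z] : Prop :=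
  ∀ z : Z, ‖z‖ = 1 →
    ∃ w : ℕ → Z, (∀ k, ‖w k‖ ≤ 1) ∧
      Tendsto (fun k => ‖w k‖) atTop (nhds 1) ∧
      Tendsto (fun k => ‖z + w k‖) atTop (nhds 1) ∧
      Tendsto (fun k => ‖z - w k‖) atTop (nhds 1) ∧
      ∀ f : Z →L[ℝ] ℝ, Tendsto (fun k => f (w k)) atTop (nhds 0)

/-- Local diameter two property: every slice of the unit ball has diameter two. -/
def HasLD2P (Z : Type*) [NormedAddCommGroup Z] [NormedSpace ℝ Z] : Prop :=
  ∀ f : Z →L[ℝ] ℝ, ‖f‖ = 1 → ∀ α : ℝ, 0 < α →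
    Metric.diam {x : Z | ‖x‖ ≤ 1 ∧ 1 - α < f x} = 2

/-- Diameter two property: every nonempty relatively weakly open subset of the unit
ball has diameter two. -/
def HasD2P (Z : Type*) [NormedAddCommGroup Z] [NormedSpace ℝ Z] : Prop :=
  ∀ U : Set Z, U.Nonempty → (∀ x ∈ U, ‖x‖ ≤ 1) →
    (∀ x ∈ U, ∃ (n : ℕ) (f : Fin n → Z →L[ℝ] ℝ) (δ : ℝ), 0 < δ ∧
      {y : Z | ‖y‖ ≤ 1 ∧ ∀ i, |f i y - f i x| < δ} ⊆ U) →
    Metric.diam U = 2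

/-- The Schur property. -/
def HasSchurProperty (Z : Type*) [SeminormedAddCommGroup Z] [NormedSpace ℝ Z] : Prop :=
  ∀ (u : ℕ → Z) (x : Z),
    (∀ f : Z →L[ℝ] ℝ, Tendsto (fun k => f (u k)) atTop (nhds (f x))) →
    Tendsto (fun k => ‖u k - x‖) atTop (nhds 0)

/-- The Dunford–Pettis property: every weakly compact operator is
weak-to-norm sequentially continuous. -/
def HasDPP (X : Type*) [NormedAddCommGroup X] [NormedSpace ℝ X] : Prop :=
  ∀ (Y : Type) (_ : NormedAddCommGroup Y) (_ : NormedSpace ℝ Y) (_ : CompleteSpace Y)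
    (T : X →L[ℝ] Y),
    (∃ K : Set (WeakSpace ℝ Y), IsCompact K ∧
      ∀ x : X, ‖x‖ ≤ 1 → toWeakSpace ℝ Y (T x) ∈ K) →
    ∀ (u : ℕ → X) (x : X),
      (∀ f : X →L[ℝ] ℝ, Tendsto (fun k => f (u k)) atTop (nhds (f x))) →
      Tendsto (fun k => ‖T (u k) - T x‖) atTop (nhds 0)

/-- `Z`, together with the bilinear-type map `t`, is (a realization of) the injective
tensor product `X ⊗̂_ε Y`: the span of elementary tensors is dense and the norm of any
linear combination of elementary tensors is given by the injective tensor norm. -/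
def IsInjTensorProduct (X Y Z : Type*) [NormedAddCommGroup X] [NormedSpace ℝ X]
    [NormedAddCommGroup Y] [NormedSpace ℝ Y] [NormedAddCommGroup Z] [NormedSpace ℝ Z]
    (t : X → Y → Z) : Prop :=
  (Submodule.span ℝ (Set.range fun p : X × Y => t p.1 p.2)).topologicalClosure = ⊤ ∧
  ∀ l : List (X × Y),
    ‖(l.map fun p => t p.1 p.2).sum‖ =
      sSup {s : ℝ | ∃ (f : X →L[ℝ] ℝ) (g : Y →L[ℝ] ℝ), ‖f‖ ≤ 1 ∧ ‖g‖ ≤ 1 ∧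
        s = |(l.map fun p => f p.1 * g p.2).sum|}

/-- `Z`, together with the map `t`, is (a realization of) the projective tensor product
`X ⊗̂_π Y`: the span of elementary tensors is dense and the norm of any combination of
elementary tensors is the infimum of `Σ ‖xᵢ‖‖yᵢ‖` over all representations (two formal
combinations represent the same tensor iff they agree against all pairs of functionals). -/
def IsProjTensorProduct (X Y Z : Type*) [NormedAddCommGroup X] [NormedSpace ℝ X]
    [NormedAddCommGroup Y] [NormedSpace ℝ Y] [NormedAddCommGroup Z] [NormedSpace ℝ Z]
    (t : X → Y → Z) : Prop :=
  (Submodule.span ℝ (Set.range fun p : X × Y => t p.1 p.2)).topologicalClosure = ⊤ ∧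
  ∀ l : List (X × Y),
    ‖(l.map fun p => t p.1 p.2).sum‖ =
      sInf {s : ℝ | ∃ l' : List (X × Y),
        (∀ (f : X →L[ℝ] ℝ) (g : Y →L[ℝ] ℝ),
          (l'.map fun p => f p.1 * g p.2).sum = (l.map fun p => f p.1 * g p.2).sum) ∧
        s = (l'.map fun p => ‖p.1‖ * ‖p.2‖).sum}

/-- `Z`, together with the diagonal map `δ : x ↦ x^N`, is (a realization of) the `N`-fold
injective symmetric tensor product `⊗̂_{ε,s,N} X`. -/
def IsInjSymTensorProduct (X : Type*) [NormedAddCommGroup X] [NormedSpace ℝ X] (N : ℕ)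
    (Z : Type*) [NormedAddCommGroup Z] [NormedSpace ℝ Z] (δ : X → Z) : Prop :=
  (Submodule.span ℝ (Set.range δ)).topologicalClosure = ⊤ ∧
  ∀ l : List (ℝ × X),
    ‖(l.map fun p => p.1 • δ p.2).sum‖ =
      sSup {s : ℝ | ∃ f : X →L[ℝ] ℝ, ‖f‖ ≤ 1 ∧
        s = |(l.map fun p => p.1 * (f p.2) ^ N).sum|}

/-- `Z`, together with the diagonal map `δ : x ↦ x^N`, is (a realization of) the `N`-fold
projective symmetric tensor product `⊗̂_{π,s,N} X`. -/
def IsProjSymTensorProduct (X : Type*) [NormedAddCommGroup X] [NormedSpace ℝ X] (N : ℕ)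
    (Z : Type*) [NormedAddCommGroup Z] [NormedSpace ℝ Z] (δ : X → Z) : Prop :=
  (Submodule.span ℝ (Set.range δ)).topologicalClosure = ⊤ ∧
  ∀ l : List (ℝ × X),
    ‖(l.map fun p => p.1 • δ p.2).sum‖ =
      sInf {s : ℝ | ∃ l' : List (ℝ × X),
        (∀ f : X →L[ℝ] ℝ,
          (l'.map fun p => p.1 * (f p.2) ^ N).sum = (l.map fun p => p.1 * (f p.2) ^ N).sum) ∧
        s = (l'.map fun p => |p.1| * ‖p.2‖ ^ N).sum}

/-- An operator `T : X* → Y` is weak*-to-weakly continuous. -/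
def WeakStarToWeakContinuous {X Y : Type*} [NormedAddCommGroup X] [NormedSpace ℝ X]
    [NormedAddCommGroup Y] [NormedSpace ℝ Y] (T : (X →L[ℝ] ℝ) →L[ℝ] Y) : Prop :=
  ∀ g : Y →L[ℝ] ℝ, Continuous fun f : WeakDual ℝ X => g (T f)

/-- The elementary tensor `x ⊗ y` regarded as the operator `x* ↦ x*(x) • y` in `L(X*, Y)`. -/
def elemTensor {X Y : Type*} [NormedAddCommGroup X] [NormedSpace ℝ X]
    [NormedAddCommGroup Y] [NormedSpace ℝ Y] (x : X) (y : Y) : (X →L[ℝ] ℝ) →L[ℝ] Y :=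
  (ContinuousLinearMap.apply ℝ ℝ x).smulRight y

/-- `n(Z, u) = 1`, i.e. `D(Z,u) = {f ∈ B_{Z*} : f(u) = 1}` is a norming set for `Z`. -/
def NormOneUnitary (Z : Type*) [NormedAddCommGroup Z] [NormedSpace ℝ Z] (u : Z) : Prop :=
  ‖u‖ = 1 ∧ ∀ z : Z, ‖z‖ ≤ sSup {r : ℝ | ∃ g : Z →L[ℝ] ℝ, ‖g‖ ≤ 1 ∧ g u = 1 ∧ r = |g z|}

/-- Asplund space: every closed separable subspace has separable dual. -/
def IsAsplund (Y : Type*) [NormedAddCommGroup Y] [NormedSpace ℝ Y] : Prop :=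
  ∀ S : Submodule ℝ Y, IsClosed (S : Set Y) → TopologicalSpace.SeparableSpace S →
    TopologicalSpace.SeparableSpace ((↥S) →L[ℝ] ℝ)

/-- The (metric) approximation-type property: finite-rank operators approximate the
identity uniformly on compact sets. -/
def HasAP (E : Type*) [NormedAddCommGroup E] [NormedSpace ℝ E] : Prop :=
  ∀ K : Set E, IsCompact K → ∀ ε : ℝ, 0 < ε →
    ∃ T : E →L[ℝ] E, FiniteDimensional ℝ (LinearMap.range (T : E →ₗ[ℝ] E)) ∧
      ∀ x ∈ K, ‖T x - x‖ ≤ ε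

end

/-!
Approximate `z` by a finite tensor `u = ∑ cᵢ xᵢ ^ N` and take `f ∈ B_{X*}` almost norming `u`,
i.e. `∑ cᵢ f(xᵢ) ^ N ≈ ‖u‖`. Weak octahedrality, applied to a finite net of the unit sphere of
`E = span {xᵢ}`, gives a unit vector `y` with `‖e + t y‖ ≳ |f e| + |t|` on `E + ℝ y`, so by
Hahn–Banach there are `g, h ∈ B_{X*}` almost equal to `f` on `E` with `g y ≈ 1` and `h y ≈ -1`.
Testing `u ± y ^ N` against `g ^ N` and `h ^ N` (for odd `N`, `-(h y) ^ N ≈ 1`) gives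
`‖u ± y ^ N‖ ≳ ‖u‖ + 1 ≈ 2`.
-/

section WeaklyOctahedral

variable {X : Type*} [NormedAddCommGroup X] [NormedSpace ℝ X]

theorem abs_apply_le_norm_of_norm_le_one {f : X →L[ℝ] ℝ} (hf : ‖f‖ ≤ 1) (x : X) :
    |f x| ≤ ‖x‖ := by
  simpa using f.le_of_opNorm_le hf x

theorem IsWeaklyOctahedral.exists_forall_le_norm_add_smul_of_finite (hX : IsWeaklyOctahedral X)
    {s : Set X} (hs : s.Finite) (hs1 : ∀ x ∈ s, ‖x‖ = 1) {f : X →L[ℝ] ℝ} (hf : ‖f‖ ≤ 1) {ε : ℝ}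
    (hε : 0 < ε) :
    ∃ y : X, ‖y‖ = 1 ∧ ∀ x ∈ s, ∀ t : ℝ, (1 - ε) * (|f x| + |t|) ≤ ‖x + t • y‖ := by
  obtain ⟨n, z, -, rfl⟩ := hs.fin_param
  obtain ⟨y, hy, hyz⟩ := hX n z (fun i => hs1 _ ⟨i, rfl⟩) f hf ε hε
  refine ⟨y, hy, ?_⟩
  rintro _ ⟨i, rfl⟩ t
  rcases lt_trichotomy t 0 with ht | rfl | ht
  · simpa [abs_of_neg ht, sub_eq_add_neg] using (hyz i (-t) (neg_pos.2 ht)).2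
  · have := abs_apply_le_norm_of_norm_le_one hf (z i)
    rw [hs1 _ ⟨i, rfl⟩] at this
    simp only [abs_zero, add_zero, zero_smul, hs1 _ ⟨i, rfl⟩]
    nlinarith [abs_nonneg (f (z i))]
  · simpa [abs_of_pos ht] using (hyz i t ht).1

theorem IsWeaklyOctahedral.exists_forall_norm_eq_one_le_norm_add_smul (hX : IsWeaklyOctahedral X)
    (E : Submodule ℝ X) [FiniteDimensional ℝ E] {f : X →L[ℝ] ℝ} (hf : ‖f‖ ≤ 1) {θ : ℝ}
    (hθ : 0 < θ) :
    ∃ y : X, ‖y‖ = 1 ∧ ∀ e ∈ E, ‖e‖ = 1 → ∀ t : ℝ,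
      (1 - θ) * (|f e| + |t|) - 2 * θ ≤ ‖e + t • y‖ := by
  have hK : IsCompact (((↑) : E → X) '' Metric.sphere 0 1) :=
    (isCompact_sphere 0 1).image continuous_subtype_val
  obtain ⟨s, hsK, hs, hKs⟩ := finite_cover_balls_of_compact hK hθ
  have hs1 : ∀ x ∈ s, ‖x‖ = 1 := by
    intro x hx
    obtain ⟨v, hv, rfl⟩ := hsK hx
    simpa using hv
  obtain ⟨y, hy, hys⟩ := hX.exists_forall_le_norm_add_smul_of_finite hs hs1 hf hθ
  refine ⟨y, hy, fun e he he1 t => ?_⟩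
  obtain ⟨v, hv, hev⟩ := Set.mem_iUnion₂.1 (hKs ⟨⟨e, he⟩, by simpa using he1, rfl⟩)
  rw [Metric.mem_ball, dist_eq_norm] at hev
  have hfv : |f e| ≤ |f v| + θ := by
    have := abs_apply_le_norm_of_norm_le_one hf (e - v)
    rw [map_sub] at this
    linarith [abs_sub_abs_le_abs_sub (f e) (f v)]
  have hnorm : ‖v + t • y‖ ≤ ‖e + t • y‖ + θ := by
    have := norm_sub_norm_le (v + t • y) (e + t • y)
    rw [add_sub_add_right_eq_sub, norm_sub_rev] at this
    linarith
  have hvt := hys v hv t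
  rcases le_or_gt θ 1 with hθ1 | hθ1
  · nlinarith [abs_nonneg (f e), abs_nonneg t]
  · nlinarith [abs_nonneg (f e), abs_nonneg t, norm_nonneg (e + t • y)]

theorem IsWeaklyOctahedral.exists_forall_mem_le_norm_add_smul (hX : IsWeaklyOctahedral X)
    (E : Submodule ℝ X) [FiniteDimensional ℝ E] {f : X →L[ℝ] ℝ} (hf : ‖f‖ ≤ 1) {c : ℝ}
    (hc : c < 1) :
    ∃ y : X, ‖y‖ = 1 ∧ ∀ e ∈ E, ∀ t : ℝ, c * (|f e| + |t|) ≤ ‖e + t • y‖ := by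
  obtain ⟨θ, hθ0, hcθ⟩ : ∃ θ : ℝ, 0 < θ ∧ c = 1 - 5 * θ := ⟨(1 - c) / 5, by linarith, by ring⟩
  obtain ⟨y, hy, hyE⟩ := hX.exists_forall_norm_eq_one_le_norm_add_smul E hf hθ0
  have hunit : ∀ e ∈ E, ‖e‖ = 1 → ∀ t : ℝ, c * (|f e| + |t|) ≤ ‖e + t • y‖ := by
    intro e he he1 t
    have h := hyE e he he1 t
    -- `‖e‖ ≤ ‖e + t • y‖ + |t|` turns the additive error into a multiplicative one
    have htri : 1 ≤ ‖e + t • y‖ + |t| := by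
      have := norm_sub_le (e + t • y) (t • y)
      rwa [add_sub_cancel_right, he1, norm_smul, hy, mul_one, Real.norm_eq_abs] at this
    have hA : 0 ≤ |f e| + |t| := by positivity
    have key : (1 - 3 * θ) * (|f e| + |t|) ≤ (1 + 2 * θ) * ‖e + t • y‖ := by
      nlinarith [mul_le_mul_of_nonneg_left htri hθ0.le, abs_nonneg (f e)]
    rw [hcθ]
    refine le_of_mul_le_mul_left ?_ (by linarith : (0 : ℝ) < 1 + 2 * θ)
    nlinarith [mul_nonneg (sq_nonneg θ) hA]
  refine ⟨y, hy, fun e he t => ?_⟩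
  rcases eq_or_ne e 0 with rfl | he0
  · simp only [map_zero, abs_zero, zero_add, norm_smul, hy, mul_one, Real.norm_eq_abs]
    nlinarith [abs_nonneg t]
  set r := ‖e‖
  have hr : 0 < r := norm_pos_iff.2 he0
  have h := hunit (r⁻¹ • e) (E.smul_mem _ he) (by simp [r, norm_smul, hr.ne']) (r⁻¹ * t)
  have hscale : e + t • y = r • (r⁻¹ • e + (r⁻¹ * t) • y) := by
    rw [smul_add, smul_smul, smul_smul, mul_inv_cancel_left₀ hr.ne', mul_inv_cancel₀ hr.ne',
      one_smul]
  rw [hscale, norm_smul_of_nonneg hr.le]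
  rw [map_smul, smul_eq_mul, abs_mul, abs_mul, abs_of_pos (inv_pos.2 hr)] at h
  calc c * (|f e| + |t|) = r * (c * (r⁻¹ * |f e| + r⁻¹ * |t|)) := by field_simp
    _ ≤ r * ‖r⁻¹ • e + (r⁻¹ * t) • y‖ := mul_le_mul_of_nonneg_left h hr.le

theorem exists_norm_le_one_extension_of_le_norm_add_smul (E : Submodule ℝ X)
    (f : X →L[ℝ] ℝ) {y : X} {c : ℝ} (hc : 0 < c)
    (hE : ∀ e ∈ E, ∀ t : ℝ, c * (|f e| + |t|) ≤ ‖e + t • y‖) {s : ℝ} (hs : |s| ≤ 1) :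
    ∃ g : X →L[ℝ] ℝ, ‖g‖ ≤ 1 ∧ g y = c * s ∧ ∀ e ∈ E, g e = c * f e := by
  have hyE : y ∉ E := fun hy => by
    have := hE y hy (-1)
    rw [neg_one_smul, add_neg_cancel, norm_zero, abs_neg, abs_one] at this
    nlinarith [abs_nonneg (f y)]
  set φ := ((c • f : X →L[ℝ] ℝ) : X →ₗ[ℝ] ℝ).toPMap E |>.supSpanSingleton y (c * s) hyE
  have hφ : ∀ x : φ.domain, φ x ≤ ‖(x : X)‖ := by
    rintro ⟨x, hx⟩
    obtain ⟨e, he, _, hz, rfl⟩ := Submodule.mem_sup.1 hx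
    obtain ⟨t, rfl⟩ := Submodule.mem_span_singleton.1 hz
    refine (LinearPMap.supSpanSingleton_apply_mk _ _ _ hyE _ he t).trans_le ?_
    have hts : t * s ≤ |t| :=
      (le_abs_self _).trans (by rw [abs_mul]; exact mul_le_of_le_one_right (abs_nonneg t) hs)
    change c * f e + t * (c * s) ≤ ‖e + t • y‖
    nlinarith [hE e he t, le_abs_self (f e)]
  obtain ⟨G, hGφ, hG⟩ := exists_extension_of_le_sublinear φ (‖·‖)
    (fun r hr x => norm_smul_of_nonneg hr.le x) norm_add_le hφ
  have hGabs : ∀ x, ‖G x‖ ≤ 1 * ‖x‖ := fun x => by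
    rw [one_mul, Real.norm_eq_abs, abs_le]
    exact ⟨by linarith [hG (-x), map_neg G x, norm_neg x], hG x⟩
  refine ⟨G.mkContinuous 1 hGabs, LinearMap.mkContinuous_norm_le _ zero_le_one _, ?_, ?_⟩
  · rw [LinearMap.mkContinuous_apply]
    exact (hGφ ⟨y, _⟩).trans (LinearPMap.supSpanSingleton_apply_self _ _ hyE)
  · intro e he
    rw [LinearMap.mkContinuous_apply]
    exact (hGφ ⟨e, _⟩).trans (LinearPMap.supSpanSingleton_apply_mk_of_mem _ _ hyE he)

theorem IsWeaklyOctahedral.exists_forall_exists_approx_extension (hX : IsWeaklyOctahedral X)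
    (E : Submodule ℝ X) [FiniteDimensional ℝ E] {f : X →L[ℝ] ℝ} (hf : ‖f‖ ≤ 1) {κ : ℝ}
    (hκ : 0 < κ) :
    ∃ y : X, ‖y‖ = 1 ∧ ∀ s : ℝ, |s| ≤ 1 → ∃ g : X →L[ℝ] ℝ, ‖g‖ ≤ 1 ∧ |g y - s| ≤ κ ∧
      ∀ e ∈ E, |g e - f e| ≤ κ * ‖e‖ := by
  set c := (1 + κ)⁻¹
  have hc0 : 0 < c := by positivity
  have hc1 : c < 1 := inv_lt_one_of_one_lt₀ (by linarith)
  have hdev : ∀ a : ℝ, |c * a - a| ≤ κ * |a| := fun a => by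
    rw [← sub_one_mul, abs_mul, abs_of_neg (by linarith)]
    refine mul_le_mul_of_nonneg_right ?_ (abs_nonneg a)
    have : c * (1 + κ) = 1 := inv_mul_cancel₀ (by positivity)
    nlinarith
  obtain ⟨y, hy, hyE⟩ := hX.exists_forall_mem_le_norm_add_smul E hf hc1
  refine ⟨y, hy, fun s hs => ?_⟩
  obtain ⟨g, hg, hgy, hgE⟩ := exists_norm_le_one_extension_of_le_norm_add_smul E f hc0 hyE hs
  refine ⟨g, hg, ?_, fun e he => ?_⟩
  · rw [hgy]
    exact (hdev s).trans (mul_le_of_le_one_right hκ.le hs)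
  · rw [hgE e he]
    exact (hdev (f e)).trans
      (mul_le_mul_of_nonneg_left (abs_apply_le_norm_of_norm_le_one hf e) hκ.le)

end WeaklyOctahedral

theorem abs_pow_sub_pow_le_of_abs_sub_le {a b C κ : ℝ} (n : ℕ) (ha : |a| ≤ C) (hb : |b| ≤ C)
    (hab : |a - b| ≤ κ * C) : |a ^ n - b ^ n| ≤ n * κ * C ^ n := by
  obtain _ | n := n
  · simp
  calc |a ^ (n + 1) - b ^ (n + 1)| ≤ |a - b| * (n + 1 : ℕ) * max |a| |b| ^ n :=
        abs_pow_sub_pow_le ..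
    _ ≤ κ * C * (n + 1 : ℕ) * C ^ n := by
        have hκC : 0 ≤ κ * C := (abs_nonneg _).trans hab
        have hC : 0 ≤ C := (abs_nonneg a).trans ha
        gcongr
        exact max_le ha hb
    _ = (n + 1 : ℕ) * κ * C ^ (n + 1) := by ring

/-- The tensor `∑ cᵢ • xᵢ ^ N` encoded by the list `l` of pairs `(cᵢ, xᵢ)`, where `δ x = x ^ N`. -/
def diagSum {X Z : Type*} [AddCommMonoid Z] [Module ℝ Z] (δ : X → Z) (l : List (ℝ × X)) : Z :=
  (l.map fun p => p.1 • δ p.2).sum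

theorem exists_diagSum_eq_of_mem_span {X Z : Type*} [AddCommMonoid Z] [Module ℝ Z] {δ : X → Z}
    {u : Z} (hu : u ∈ Submodule.span ℝ (Set.range δ)) : ∃ l : List (ℝ × X), diagSum δ l = u := by
  induction hu using Submodule.span_induction with
  | mem _ hx =>
    obtain ⟨x, rfl⟩ := hx
    exact ⟨[(1, x)], by simp [diagSum]⟩
  | zero => exact ⟨[], rfl⟩
  | add _ _ _ _ hu hv =>
    obtain ⟨l, rfl⟩ := hu
    obtain ⟨l', rfl⟩ := hv
    exact ⟨l ++ l', by simp [diagSum]⟩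
  | smul a _ _ hu =>
    obtain ⟨l, rfl⟩ := hu
    exact ⟨l.map fun p => (a * p.1, p.2),
      by simp [diagSum, List.smul_sum, mul_smul, Function.comp_def]⟩

section InjectiveSymmetricTensor

variable {X : Type*} [NormedAddCommGroup X] [NormedSpace ℝ X] {N : ℕ}

/-- The polynomial `f ^ N` evaluated on the tensor `diagSum δ l`. -/
def powPairing (N : ℕ) (f : X →L[ℝ] ℝ) (l : List (ℝ × X)) : ℝ :=
  (l.map fun p => p.1 * f p.2 ^ N).sum

theorem abs_powPairing_le {f : X →L[ℝ] ℝ} (hf : ‖f‖ ≤ 1) (l : List (ℝ × X)) :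
    |powPairing N f l| ≤ (l.map fun p => |p.1| * ‖p.2‖ ^ N).sum := by
  refine (Multiset.abs_sum_le_sum_abs
    (s := (↑(l.map fun p : ℝ × X => p.1 * f p.2 ^ N) : Multiset ℝ))).trans ?_
  rw [Multiset.map_coe, Multiset.sum_coe, List.map_map]
  refine List.sum_le_sum fun p _ => ?_
  rw [Function.comp_apply, abs_mul, abs_pow]
  gcongr
  exact abs_apply_le_norm_of_norm_le_one hf p.2

theorem powPairing_neg (hN : Odd N) (f : X →L[ℝ] ℝ) (l : List (ℝ × X)) :
    powPairing N (-f) l = -powPairing N f l := by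
  rw [powPairing, powPairing, ← neg_one_mul, ← List.sum_map_mul_left]
  congr 1
  refine List.map_congr_left fun p _ => ?_
  rw [neg_apply, hN.neg_pow]
  ring

theorem powPairing_le_add_of_abs_sub_le {f g : X →L[ℝ] ℝ} (hf : ‖f‖ ≤ 1) (hg : ‖g‖ ≤ 1)
    {κ : ℝ} {l : List (ℝ × X)} (hfg : ∀ p ∈ l, |g p.2 - f p.2| ≤ κ * ‖p.2‖) :
    powPairing N f l ≤ powPairing N g l + N * κ * (l.map fun p => |p.1| * ‖p.2‖ ^ N).sum := by
  rw [powPairing, powPairing, ← List.sum_map_mul_left, ← List.sum_map_add]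
  refine List.sum_le_sum fun p hp => ?_
  have := abs_pow_sub_pow_le_of_abs_sub_le N (abs_apply_le_norm_of_norm_le_one hg p.2)
    (abs_apply_le_norm_of_norm_le_one hf p.2) (hfg p hp)
  have := mul_le_mul_of_nonneg_left this (abs_nonneg p.1)
  rw [← abs_mul, mul_sub] at this
  linarith [neg_abs_le (p.1 * g p.2 ^ N - p.1 * f p.2 ^ N)]

theorem bddAbove_abs_powPairing (l : List (ℝ × X)) :
    BddAbove {s : ℝ | ∃ f : X →L[ℝ] ℝ, ‖f‖ ≤ 1 ∧ s = |powPairing N f l|} :=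
  ⟨_, by rintro _ ⟨f, hf, rfl⟩; exact abs_powPairing_le hf l⟩

namespace IsInjSymTensorProduct

variable {Z : Type*} [NormedAddCommGroup Z] [NormedSpace ℝ Z] {δ : X → Z}
  (hδ : IsInjSymTensorProduct X N Z δ)
include hδ

theorem norm_diagSum (l : List (ℝ × X)) :
    ‖diagSum δ l‖ = sSup {s : ℝ | ∃ f : X →L[ℝ] ℝ, ‖f‖ ≤ 1 ∧ s = |powPairing N f l|} :=
  hδ.2 l

theorem powPairing_le_norm {f : X →L[ℝ] ℝ} (hf : ‖f‖ ≤ 1) (l : List (ℝ × X)) :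
    powPairing N f l ≤ ‖diagSum δ l‖ := by
  rw [hδ.norm_diagSum]
  exact (le_abs_self _).trans (le_csSup (bddAbove_abs_powPairing l) ⟨f, hf, rfl⟩)

theorem norm_apply (x : X) : ‖δ x‖ = ‖x‖ ^ N := by
  have hx : diagSum δ [(1, x)] = δ x := by simp [diagSum]
  obtain ⟨g, hg, hgx⟩ := exists_dual_vector'' ℝ x
  rw [← hx, hδ.norm_diagSum]
  refine IsGreatest.csSup_eq ⟨⟨g, hg, by simp [powPairing, hgx]⟩, ?_⟩
  rintro _ ⟨f, hf, rfl⟩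
  simpa [powPairing] using abs_powPairing_le (N := N) hf [(1, x)]

theorem exists_lt_powPairing (hN : Odd N) (l : List (ℝ × X)) {η : ℝ} (hη : 0 < η) :
    ∃ f : X →L[ℝ] ℝ, ‖f‖ ≤ 1 ∧ ‖diagSum δ l‖ - η < powPairing N f l := by
  set S := {s : ℝ | ∃ f : X →L[ℝ] ℝ, ‖f‖ ≤ 1 ∧ s = |powPairing N f l|}
  have hS : S.Nonempty := ⟨_, 0, by simp, rfl⟩
  have hlt : ‖diagSum δ l‖ - η < sSup S := by
    rw [← hδ.norm_diagSum]; linarith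
  obtain ⟨_, ⟨f, hf, rfl⟩, hfl⟩ := exists_lt_of_lt_csSup hS hlt
  rcases lt_abs.1 hfl with h | h
  · exact ⟨f, hf, h⟩
  · exact ⟨-f, by rwa [norm_neg], by rwa [powPairing_neg hN]⟩

theorem exists_le_norm_diagSum_add_smul (hX : IsWeaklyOctahedral X) (hN : Odd N)
    (l : List (ℝ × X)) {η : ℝ} (hη : 0 < η) :
    ∃ y : X, ‖y‖ = 1 ∧ ∀ s : ℝ, |s| = 1 → ‖diagSum δ l‖ + 1 - η ≤ ‖diagSum δ l + s • δ y‖ := by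
  set M := (l.map fun p => |p.1| * ‖p.2‖ ^ N).sum
  have hM : 0 ≤ M := (abs_nonneg _).trans (abs_powPairing_le (f := 0) (by simp) l)
  have hN0 : (0 : ℝ) < N := by exact_mod_cast hN.pos
  obtain ⟨κ, hκ, hNκ⟩ : ∃ κ : ℝ, 0 < κ ∧ N * κ * (M + 1) = η / 2 :=
    ⟨η / (2 * (N * (M + 1))), by positivity, by field_simp⟩
  obtain ⟨f, hf, hfl⟩ := hδ.exists_lt_powPairing hN l (half_pos hη)
  set E := Submodule.span ℝ (Prod.snd '' {p | p ∈ l})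
  have : FiniteDimensional ℝ E := FiniteDimensional.span_of_finite ℝ (l.finite_toSet.image _)
  obtain ⟨y, hy, hyE⟩ := hX.exists_forall_exists_approx_extension E hf hκ
  refine ⟨y, hy, fun s hs => ?_⟩
  obtain ⟨g, hg, hgy, hgE⟩ := hyE s hs.le
  have hfg : powPairing N f l ≤ powPairing N g l + N * κ * M :=
    powPairing_le_add_of_abs_sub_le hf hg fun p hp =>
      hgE _ (Submodule.subset_span ⟨p, hp, rfl⟩)
  -- `s * s ^ N = 1` because `N + 1` is even
  have hgys : 1 - N * κ ≤ s * g y ^ N := by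
    have hdiff := abs_pow_sub_pow_le_of_abs_sub_le (κ := κ) N
      (hy ▸ abs_apply_le_norm_of_norm_le_one hg y) hs.le (by rwa [mul_one])
    rw [one_pow, mul_one] at hdiff
    have hss : s * s ^ N = 1 := by rw [← pow_succ', ← hN.add_one.pow_abs, hs, one_pow]
    have hsd := neg_abs_le (s * (g y ^ N - s ^ N))
    rw [abs_mul, hs, one_mul] at hsd
    linarith [show s * g y ^ N = s * s ^ N + s * (g y ^ N - s ^ N) by ring]
  have hnorm : s * g y ^ N + powPairing N g l ≤ ‖diagSum δ l + s • δ y‖ := by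
    have := hδ.powPairing_le_norm hg ((s, y) :: l)
    rwa [diagSum, List.map_cons, List.sum_cons, add_comm, ← diagSum, powPairing, List.map_cons,
      List.sum_cons, ← powPairing] at this
  linarith

end IsInjSymTensorProduct

end InjectiveSymmetricTensor

theorem statement12_general (X : Type*) [NormedAddCommGroup X] [NormedSpace ℝ X]
    (hX : IsWeaklyOctahedral X) (N : ℕ) (hN : Odd N)
    (Z : Type*) [NormedAddCommGroup Z] [NormedSpace ℝ Z]
    (δ : X → Z) (hδ : IsInjSymTensorProduct X N Z δ) :
    IsLocallyOctahedral Z := by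
  intro z hz ε hε
  have hz_mem : z ∈ closure (Submodule.span ℝ (Set.range δ) : Set Z) := by
    rw [← Submodule.topologicalClosure_coe, hδ.1]
    trivial
  obtain ⟨u, hu, hzu⟩ := Metric.mem_closure_iff.1 hz_mem (ε / 4) (by positivity)
  obtain ⟨l, rfl⟩ := exists_diagSum_eq_of_mem_span hu
  obtain ⟨y, hy, hyl⟩ := hδ.exists_le_norm_diagSum_add_smul hX hN l (η := ε / 4) (by positivity)
  have hfar : ∀ s : ℝ, |s| = 1 → 2 - ε < ‖z + s • δ y‖ := fun s hs => by
    have hmove := norm_sub_norm_le (diagSum δ l + s • δ y) (z + s • δ y)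
    rw [add_sub_add_right_eq_sub, norm_sub_rev, ← dist_eq_norm] at hmove
    have hu1 := norm_sub_norm_le z (diagSum δ l)
    rw [← dist_eq_norm] at hu1
    linarith [hyl s hs]
  refine ⟨δ y, by rw [hδ.norm_apply, hy, one_pow], ?_, ?_⟩
  · simpa using hfar 1 (by simp)
  · simpa [sub_eq_add_neg] using hfar (-1) (by simp)

theorem statement12 (X : Type*) [NormedAddCommGroup X] [NormedSpace ℝ X] [CompleteSpace X]
    (hX : IsWeaklyOctahedral X) (N : ℕ) (hN : Odd N)
    (Z : Type*) [NormedAddCommGroup Z] [NormedSpace ℝ Z] [CompleteSpace Z]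
    (δ : X → Z) (hδ : IsInjSymTensorProduct X N Z δ) :
    IsLocallyOctahedral Z :=
  statement12_general X hX N hN Z δ hδ
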